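/- arXiv:2307.16428 — 4 statements merged into one kernel-verified Lean document; each statement's English description precedes it below -/
import Mathlib

section
/- There is a constant C > 0 such that for every t ≠ 0 and every Schwartz function f on ℝ³, the function (cos(tΔ)f)(x) := (2π)^{−3} ∫_{ℝ³} e^{i x·ξ} cos(t|ξ|²) f̂(ξ) dξ, where f̂(ξ) := ∫_{ℝ³} e^{−i y·ξ} f(y) dy, satisfies ‖cos(tΔ)f‖_{L^∞(ℝ³)} ≤ C |t|^{−3/2} ‖f‖_{L¹(ℝ³)}. -/
/-!
Regularise the frequency integral by the Gaussian factor `e^{-ε|ξ|²}`. Then Fubini turns it into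
the convolution of `f` with the kernel `K(w) = ∫ e^{-ε|ξ|²} cos(t|ξ|²) e^{i w·ξ} dξ`, and writing
`cos(t|ξ|²)` as the average of `e^{±it|ξ|²}` makes `K` the average of two complex Gaussian integrals
`∫ e^{-(ε ∓ it)|ξ|² + i w·ξ} dξ = (π / (ε ∓ it))^{d/2} e^{-|w|² / (4(ε ∓ it))}`. Each has modulus at
most `(π / |t|)^{d/2}`, uniformly in `ε`, and since `f̂` is integrable we may let `ε → 0`.
-/

noncomputable section

open MeasureTheory Real Filter Module
open Complex (I)
open scoped Complex RealInnerProductSpace FourierTransform SchwartzMap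

lemma cexp_mul_cos_eq (ε t a c : ℂ) :
    cexp (-ε * a + c) * Complex.cos (t * a) =
      (cexp (-(ε - t * I) * a + c) + cexp (-(ε + t * I) * a + c)) / 2 := by
  rw [Complex.cos, mul_div_assoc', mul_add, ← Complex.exp_add, ← Complex.exp_add]
  ring_nf

lemma norm_cexp_neg_div_le_one {b : ℂ} (hb : 0 < b.re) {r : ℝ} (hr : 0 ≤ r) :
    ‖cexp (-r / b)‖ ≤ 1 := by
  rw [Complex.norm_exp, Real.exp_le_one_iff, div_eq_mul_inv, ← Complex.ofReal_neg,
    Complex.re_ofReal_mul, Complex.inv_re]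
  exact mul_nonpos_of_nonpos_of_nonneg (neg_nonpos.mpr hr)
    (div_nonneg hb.le (Complex.normSq_nonneg b))

section InnerProductSpace

variable {V : Type*} [NormedAddCommGroup V] [InnerProductSpace ℝ V] [FiniteDimensional ℝ V]
  [MeasurableSpace V] [BorelSpace V]

theorem norm_integral_cexp_neg_mul_sq_norm_add_le {b : ℂ} (hb : 0 < b.re) (w : V) :
    ‖∫ v : V, cexp (-b * ‖v‖ ^ 2 + I * ⟪w, v⟫)‖ ≤ (π / ‖b‖) ^ (finrank ℝ V / 2 : ℝ) := by
  have hb0 : b ≠ 0 := fun h => by simp [h] at hb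
  rw [GaussianFourier.integral_cexp_neg_mul_sq_norm_add hb, norm_mul,
    Complex.norm_cpow_of_ne_zero (div_ne_zero (by exact_mod_cast pi_ne_zero) hb0)]
  have hexp : I ^ 2 * (‖w‖ : ℂ) ^ 2 / (4 * b) = -((‖w‖ ^ 2 / 4 : ℝ) : ℂ) / b := by
    rw [Complex.I_sq]; push_cast; field_simp
  rw [hexp]
  calc _ ≤ ‖(π : ℂ) / b‖ ^ (finrank ℝ V / 2 : ℝ) * 1 := by
          gcongr
          · simp
          · exact norm_cexp_neg_div_le_one hb (by positivity)
    _ = _ := by simp [abs_of_pos pi_pos]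

def gaussianCosKernel (ε t : ℝ) (w : V) : ℂ :=
  ∫ ξ : V, cexp (-ε * ‖ξ‖ ^ 2 + I * ⟪w, ξ⟫) * Real.cos (t * ‖ξ‖ ^ 2)

theorem norm_gaussianCosKernel_le {ε t : ℝ} (hε : 0 < ε) (ht : t ≠ 0) (w : V) :
    ‖gaussianCosKernel ε t w‖ ≤ (π / |t|) ^ (finrank ℝ V / 2 : ℝ) := by
  have hre : ∀ s : ℝ, 0 < ((ε : ℂ) + s * I).re := fun s => by simpa using hε
  have hnorm : ∀ s : ℝ, |t| ≤ |s| → (π / ‖(ε : ℂ) + s * I‖) ^ (finrank ℝ V / 2 : ℝ) ≤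
      (π / |t|) ^ (finrank ℝ V / 2 : ℝ) := fun s hs => by
    have him : |s| ≤ ‖(ε : ℂ) + s * I‖ := by simpa using Complex.abs_im_le_norm ((ε : ℂ) + s * I)
    gcongr
    exact hs.trans him
  have hint : ∀ s : ℝ, Integrable fun ξ : V => cexp (-((ε : ℂ) + s * I) * ‖ξ‖ ^ 2 + I * ⟪w, ξ⟫) :=
    fun s => GaussianFourier.integrable_cexp_neg_mul_sq_norm_add (hre s) I w
  have hsub : (ε : ℂ) - t * I = ε + (-t : ℝ) * I := by push_cast; ring
  unfold gaussianCosKernel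
  simp_rw [Complex.ofReal_cos, Complex.ofReal_mul, Complex.ofReal_pow, cexp_mul_cos_eq, hsub]
  rw [integral_div, integral_add (hint _) (hint _), norm_div, Complex.norm_ofNat]
  calc _ ≤ (‖∫ ξ : V, cexp (-((ε : ℂ) + (-t : ℝ) * I) * ‖ξ‖ ^ 2 + I * ⟪w, ξ⟫)‖ +
          ‖∫ ξ : V, cexp (-((ε : ℂ) + t * I) * ‖ξ‖ ^ 2 + I * ⟪w, ξ⟫)‖) / 2 := by
          gcongr; exact norm_add_le _ _
    _ ≤ ((π / |t|) ^ (finrank ℝ V / 2 : ℝ) + (π / |t|) ^ (finrank ℝ V / 2 : ℝ)) / 2 := by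
          gcongr
          · exact (norm_integral_cexp_neg_mul_sq_norm_add_le (hre _) w).trans
              (hnorm _ (by rw [abs_neg]))
          · exact (norm_integral_cexp_neg_mul_sq_norm_add_le (hre _) w).trans (hnorm _ le_rfl)
    _ = _ := by ring

theorem integral_gaussian_mul_cos_fourier_eq {ε : ℝ} (hε : 0 < ε) (t : ℝ) {f : V → ℂ}
    (hf : Integrable f) (x : V) :
    ∫ ξ : V, cexp (-ε * ‖ξ‖ ^ 2) * (cexp (I * ⟪x, ξ⟫) * Real.cos (t * ‖ξ‖ ^ 2) *
        ∫ y : V, cexp (-I * ⟪y, ξ⟫) * f y) =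
      ∫ y : V, gaussianCosKernel ε t (x - y) * f y := by
  set F : V → V → ℂ := fun ξ y =>
    cexp (-ε * ‖ξ‖ ^ 2 + I * ⟪x - y, ξ⟫) * Real.cos (t * ‖ξ‖ ^ 2) * f y
  have hg : Integrable fun ξ : V => cexp (-ε * ‖ξ‖ ^ 2) := by
    simpa using GaussianFourier.integrable_cexp_neg_mul_sq_norm_add (V := V) (b := ε)
      (by simpa using hε) 0 0
  have hF : Integrable (Function.uncurry F) (volume.prod volume) := by
    refine (hg.norm.mul_prod hf.norm).mono' ?_ (Eventually.of_forall fun p => ?_)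
    · exact (Continuous.aestronglyMeasurable (by fun_prop)).mul hf.1.comp_snd
    · have hcos : ‖(Real.cos (t * ‖p.1‖ ^ 2) : ℂ)‖ ≤ 1 := by
        rw [Complex.norm_real, norm_eq_abs]
        exact abs_cos_le_one _
      simp only [Function.uncurry, F, norm_mul, Complex.norm_exp]
      gcongr
      refine (mul_le_of_le_one_right (exp_pos _).le hcos).trans_eq ?_
      simp
  calc _ = ∫ ξ, ∫ y, F ξ y := integral_congr_ae <| Eventually.of_forall fun ξ => by
          rw [← mul_assoc, ← integral_const_mul]
          congr 1
          funext y
          simp only [F]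
          rw [inner_sub_left, Complex.ofReal_sub, mul_sub, sub_eq_add_neg, ← add_assoc, ← neg_mul,
            Complex.exp_add, Complex.exp_add]
          ring
    _ = ∫ y, ∫ ξ, F ξ y := integral_integral_swap hF
    _ = _ := by simp only [F, integral_mul_const, gaussianCosKernel]

theorem norm_integral_gaussian_mul_cos_fourier_le {ε t : ℝ} (hε : 0 < ε) (ht : t ≠ 0)
    {f : V → ℂ} (hf : Integrable f) (x : V) :
    ‖∫ ξ : V, cexp (-ε * ‖ξ‖ ^ 2) * (cexp (I * ⟪x, ξ⟫) * Real.cos (t * ‖ξ‖ ^ 2) *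
        ∫ y : V, cexp (-I * ⟪y, ξ⟫) * f y)‖ ≤
      (π / |t|) ^ (finrank ℝ V / 2 : ℝ) * ∫ y : V, ‖f y‖ := by
  rw [integral_gaussian_mul_cos_fourier_eq hε t hf x, ← integral_const_mul]
  refine (norm_integral_le_integral_norm _).trans (integral_mono_of_nonneg
    (Eventually.of_forall fun _ => norm_nonneg _) (hf.norm.const_mul _)
    (Eventually.of_forall fun y => ?_))
  simp only [norm_mul]
  exact mul_le_mul_of_nonneg_right (norm_gaussianCosKernel_le hε ht _) (norm_nonneg _)

theorem norm_integral_cos_fourier_le {t : ℝ} (ht : t ≠ 0) {f : V → ℂ} (hf : Integrable f)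
    (hf' : Integrable fun ξ : V => ∫ y : V, cexp (-I * ⟪y, ξ⟫) * f y) (x : V) :
    ‖∫ ξ : V, cexp (I * ⟪x, ξ⟫) * Real.cos (t * ‖ξ‖ ^ 2) *
        ∫ y : V, cexp (-I * ⟪y, ξ⟫) * f y‖ ≤
      (π / |t|) ^ (finrank ℝ V / 2 : ℝ) * ∫ y : V, ‖f y‖ := by
  have hG : Integrable fun ξ : V => cexp (I * ⟪x, ξ⟫) * Real.cos (t * ‖ξ‖ ^ 2) *
      ∫ y : V, cexp (-I * ⟪y, ξ⟫) * f y := by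
    refine hf'.bdd_mul (c := 1) (Continuous.aestronglyMeasurable (by fun_prop))
      (Eventually.of_forall fun ξ => ?_)
    rw [norm_mul, mul_comm I, Complex.norm_exp_ofReal_mul_I, one_mul, Complex.norm_real,
      norm_eq_abs]
    exact abs_cos_le_one _
  refine le_of_tendsto (Real.tendsto_integral_cexp_sq_smul hG).norm ?_
  filter_upwards [Ioi_mem_atTop 0] with c hc
  simpa only [smul_eq_mul] using
    norm_integral_gaussian_mul_cos_fourier_le (inv_pos.mpr hc) ht hf x

lemma integral_cexp_neg_inner_mul_eq_fourier (f : V → ℂ) (ξ : V) :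
    ∫ y : V, cexp (-I * ⟪y, ξ⟫) * f y = 𝓕 f ((2 * π)⁻¹ • ξ) := by
  rw [Real.fourier_eq']
  refine integral_congr_ae (Eventually.of_forall fun y => ?_)
  simp only [real_inner_smul_right, smul_eq_mul]
  congr 2
  field_simp
  push_cast
  ring

lemma SchwartzMap.integrable_integral_cexp_neg_inner_mul (f : 𝓢(V, ℂ)) :
    Integrable fun ξ : V => ∫ y : V, cexp (-I * ⟪y, ξ⟫) * f y := by
  simp only [integral_cexp_neg_inner_mul_eq_fourier]
  exact (𝓕 f).integrable.comp_smul (inv_ne_zero (by positivity))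

end InnerProductSpace

/-- the free beam propagator `cos(tΔ)`, defined on Schwartz functions via the
Fourier multiplier with symbol `cos(t|ξ|²)`, maps `L¹(ℝ³) → L^∞(ℝ³)` with norm `≲ |t|^{-3/2}`. -/
theorem stmt3 :
    ∃ C : ℝ, 0 < C ∧ ∀ t : ℝ, t ≠ 0 →
      ∀ f : SchwartzMap (EuclideanSpace ℝ (Fin 3)) ℂ, ∀ x : EuclideanSpace ℝ (Fin 3),
      ‖((((2 * Real.pi) ^ 3)⁻¹ : ℝ) : ℂ) *
          ∫ ξ : EuclideanSpace ℝ (Fin 3),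
            Complex.exp (Complex.I * ((⟪x, ξ⟫ : ℝ) : ℂ)) *
              ((Real.cos (t * ‖ξ‖ ^ 2) : ℝ) : ℂ) *
              ∫ y : EuclideanSpace ℝ (Fin 3),
                Complex.exp (-Complex.I * ((⟪y, ξ⟫ : ℝ) : ℂ)) * f y‖
        ≤ C * |t| ^ (-(3 : ℝ) / 2) * ∫ y : EuclideanSpace ℝ (Fin 3), ‖f y‖ := by
  refine ⟨((2 * π) ^ 3)⁻¹ * π ^ (3 / 2 : ℝ), by positivity, fun t ht f x => ?_⟩
  have hbound := norm_integral_cos_fourier_le ht f.integrable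
    f.integrable_integral_cexp_neg_inner_mul x
  rw [finrank_euclideanSpace_fin, Nat.cast_ofNat] at hbound
  have hsplit : (π / |t|) ^ (3 / 2 : ℝ) = π ^ (3 / 2 : ℝ) * |t| ^ (-(3 : ℝ) / 2) := by
    rw [div_rpow pi_nonneg (abs_nonneg t), neg_div, rpow_neg (abs_nonneg t), div_eq_mul_inv]
  rw [norm_mul, Complex.norm_real, norm_of_nonneg (by positivity)]
  calc _ ≤ ((2 * π) ^ 3)⁻¹ * ((π / |t|) ^ (3 / 2 : ℝ) * ∫ y, ‖f y‖) := by gcongr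
    _ = _ := by rw [hsplit]; ring
end
end

section
/- There is a constant C > 0 such that for all t ≠ 0 and every N₀ ∈ ℤ: ∑_{N∈ℤ, |N−N₀|≤2} 2^{3N} (1 + |t| 2^{2N})^{−3/2} + ∑_{N∈ℤ, |N−N₀|>2} 2^{3N} (1 + |t| 2^{2N})^{−2} ≤ C |t|^{−3/2}; equivalently, ∑_{N∈ℤ} 2^{3N} Θ_{N₀,N}(t) ≤ C |t|^{−3/2} uniformly in N₀. -/
noncomputable section

open MeasureTheory Real

open Function in
lemma geom_key (c r : ℝ) (e : ℕ → ℤ) (he : Injective e)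
    (P : ℤ → Prop) [DecidablePred P] (hP : ∀ N, P N ↔ N ∈ Set.range e)
    (v : ℤ → ℝ) (hv : ∀ n : ℕ, v (e n) = c * r ^ n) (hr0 : 0 ≤ r) (hr1 : r < 1) :
    Summable (fun N : ℤ => if P N then v N else 0) ∧
    ∑' N : ℤ, (if P N then v N else 0) = c * (1 - r)⁻¹ := by
  set f : ℤ → ℝ := fun N => if P N then v N else 0 with hf
  have hrange : ∀ N : ℤ, N ∉ Set.range e → f N = 0 := by
    intro N hN
    have : ¬ P N := fun h => hN ((hP N).mp h)
    simp [hf, this]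
  have hcomp : (f ∘ e) = fun n : ℕ => c * r ^ n := by
    funext n
    simp only [comp_apply, hf, if_pos ((hP (e n)).mpr ⟨n, rfl⟩)]
    exact hv n
  have hs : Summable (f ∘ e) := by
    rw [hcomp]
    exact (summable_geometric_of_lt_one hr0 hr1).mul_left _
  have hsupp : Function.support f ⊆ Set.range e := fun N hN => by
    by_contra h; exact hN (hrange N h)
  have hsum : Summable f := (he.summable_iff hrange).mp hs
  refine ⟨hsum, ?_⟩
  rw [← he.tsum_eq hsupp]
  have h2 : ∑' n : ℕ, f (e n) = ∑' n : ℕ, c * r ^ n :=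
    tsum_congr fun n => congrFun hcomp n
  rw [h2, tsum_mul_left, tsum_geometric_of_lt_one hr0 hr1]

/-- `Θ_{N₀,N}(t)`: the dyadic weight function from the paper. -/
noncomputable def Theta (t : ℝ) (N₀ N : ℤ) : ℝ :=
  if |N - N₀| ≤ 2 then (1 + |t| * (2 : ℝ) ^ (2 * N)) ^ (-(3 : ℝ) / 2)
  else (1 + |t| * (2 : ℝ) ^ (2 * N)) ^ (-(2 : ℝ))

/-- There is `C > 0` such that for all `t ≠ 0` and all `N₀ ∈ ℤ`,
`∑_{N∈ℤ} 2^{3N} Θ_{N₀,N}(t) ≤ C |t|^{-3/2}`, uniformly in `N₀`. -/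
theorem stmt7 :
    ∃ C : ℝ, 0 < C ∧ ∀ t : ℝ, t ≠ 0 → ∀ N₀ : ℤ,
      Summable (fun N : ℤ => (2 : ℝ) ^ (3 * N) * Theta t N₀ N) ∧
      ∑' N : ℤ, (2 : ℝ) ^ (3 * N) * Theta t N₀ N ≤ C * |t| ^ (-(3 : ℝ) / 2) := by
  refine ⟨10, by norm_num, ?_⟩
  intro t ht N₀
  set a : ℝ := |t| with haa
  have ha : 0 < a := abs_pos.mpr ht
  set M : ℤ := ⌊Real.logb 4 a⁻¹⌋ with hM
  -- key bracketing of a⁻¹ by powers of 4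
  have hlogb : (4:ℝ) ^ Real.logb 4 a⁻¹ = a⁻¹ :=
    Real.rpow_logb (by norm_num) (by norm_num) (inv_pos.mpr ha)
  have h4M : ∀ k : ℤ, (4:ℝ) ^ k = (2:ℝ) ^ (2 * k) := by
    intro k
    rw [show (4:ℝ) = (2:ℝ) ^ (2:ℤ) by norm_num, ← zpow_mul]
  have h1 : (2:ℝ) ^ (2 * M) ≤ a⁻¹ := by
    rw [← h4M]
    calc (4:ℝ) ^ M = (4:ℝ) ^ ((M : ℤ) : ℝ) := (Real.rpow_intCast 4 M).symm
      _ ≤ (4:ℝ) ^ Real.logb 4 a⁻¹ :=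
          Real.rpow_le_rpow_of_exponent_le (by norm_num) (Int.floor_le _)
      _ = a⁻¹ := hlogb
  have h2 : a⁻¹ ≤ (2:ℝ) ^ (2 * M + 2) := by
    have : (2:ℝ) ^ (2 * M + 2) = (4:ℝ) ^ (M + 1) := by
      rw [h4M]; ring_nf
    rw [this]
    calc a⁻¹ = (4:ℝ) ^ Real.logb 4 a⁻¹ := hlogb.symm
      _ ≤ (4:ℝ) ^ (((M + 1 : ℤ)) : ℝ) := by
          apply Real.rpow_le_rpow_of_exponent_le (by norm_num)
          push_cast
          exact (Int.lt_floor_add_one _).le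
      _ = (4:ℝ) ^ (M + 1 : ℤ) := Real.rpow_intCast 4 (M + 1)
  set cN : ℝ := a ^ (-(3:ℝ)/2) with hcN
  have hcN0 : 0 ≤ cN := Real.rpow_nonneg ha.le _
  -- zpow-to-rpow juggling
  have hzr : ∀ (k : ℤ) (z : ℝ), ((2:ℝ) ^ k) ^ z = (2:ℝ) ^ ((k : ℝ) * z) := by
    intro k z
    rw [← Real.rpow_intCast 2 k, ← Real.rpow_mul (by norm_num)]
  -- the basic pointwise bounds
  have hbpos : ∀ N : ℤ, (0:ℝ) < a * (2:ℝ) ^ (2 * N) := by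
    intro N; positivity
  have hb1 : ∀ N : ℤ, (1:ℝ) ≤ 1 + a * (2:ℝ) ^ (2 * N) := by
    intro N; nlinarith [hbpos N]
  have key32 : ∀ N : ℤ, (2:ℝ) ^ (3 * N) * (1 + a * (2:ℝ) ^ (2 * N)) ^ (-(3:ℝ)/2) ≤ cN := by
    intro N
    have step1 : (1 + a * (2:ℝ) ^ (2 * N)) ^ (-(3:ℝ)/2)
        ≤ (a * (2:ℝ) ^ (2 * N)) ^ (-(3:ℝ)/2) :=
      Real.rpow_le_rpow_of_nonpos (hbpos N) (by nlinarith [hbpos N]) (by norm_num)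
    have step2 : (a * (2:ℝ) ^ (2 * N)) ^ (-(3:ℝ)/2) = cN * (2:ℝ) ^ (-(3 * N)) := by
      rw [Real.mul_rpow ha.le (by positivity), hzr]
      congr 1
      rw [show ((2 * N : ℤ) : ℝ) * (-(3:ℝ)/2) = ((-(3 * N) : ℤ) : ℝ) by push_cast; ring,
        Real.rpow_intCast]
    have step3 : (2:ℝ) ^ (3 * N) * ((2:ℝ) ^ (-(3 * N)) : ℝ) = 1 := by
      rw [← zpow_add₀ (by norm_num : (2:ℝ) ≠ 0)]; norm_num
    calc (2:ℝ) ^ (3 * N) * (1 + a * (2:ℝ) ^ (2 * N)) ^ (-(3:ℝ)/2)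
        ≤ (2:ℝ) ^ (3 * N) * (a * (2:ℝ) ^ (2 * N)) ^ (-(3:ℝ)/2) := by
          apply mul_le_mul_of_nonneg_left step1 (by positivity)
      _ = cN * ((2:ℝ) ^ (3 * N) * (2:ℝ) ^ (-(3 * N))) := by rw [step2]; ring
      _ = cN := by rw [step3, mul_one]
  have key2 : ∀ N : ℤ, (2:ℝ) ^ (3 * N) * (1 + a * (2:ℝ) ^ (2 * N)) ^ (-(2:ℝ))
      ≤ a ^ (-(2:ℝ)) * (2:ℝ) ^ (-N) := by
    intro N
    have step1 : (1 + a * (2:ℝ) ^ (2 * N)) ^ (-(2:ℝ))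
        ≤ (a * (2:ℝ) ^ (2 * N)) ^ (-(2:ℝ)) :=
      Real.rpow_le_rpow_of_nonpos (hbpos N) (by nlinarith [hbpos N]) (by norm_num)
    have step2 : (a * (2:ℝ) ^ (2 * N)) ^ (-(2:ℝ)) = a ^ (-(2:ℝ)) * (2:ℝ) ^ (-(4 * N)) := by
      rw [Real.mul_rpow ha.le (by positivity), hzr]
      congr 1
      rw [show ((2 * N : ℤ) : ℝ) * (-(2:ℝ)) = ((-(4 * N) : ℤ) : ℝ) by push_cast; ring,
        Real.rpow_intCast]
    have step3 : (2:ℝ) ^ (3 * N) * ((2:ℝ) ^ (-(4 * N)) : ℝ) = (2:ℝ) ^ (-N) := by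
      rw [← zpow_add₀ (by norm_num : (2:ℝ) ≠ 0)]; ring_nf
    calc (2:ℝ) ^ (3 * N) * (1 + a * (2:ℝ) ^ (2 * N)) ^ (-(2:ℝ))
        ≤ (2:ℝ) ^ (3 * N) * (a * (2:ℝ) ^ (2 * N)) ^ (-(2:ℝ)) := by
          apply mul_le_mul_of_nonneg_left step1 (by positivity)
      _ = a ^ (-(2:ℝ)) * ((2:ℝ) ^ (3 * N) * (2:ℝ) ^ (-(4 * N))) := by rw [step2]; ring
      _ = a ^ (-(2:ℝ)) * (2:ℝ) ^ (-N) := by rw [step3]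
  -- Theta is at most 1
  have hTheta_le_one : ∀ N : ℤ, Theta t N₀ N ≤ 1 := by
    intro N
    unfold Theta
    rw [haa] at *
    split <;> exact Real.rpow_le_one_of_one_le_of_nonpos (hb1 N) (by norm_num)
  have hTheta_nonneg : ∀ N : ℤ, 0 ≤ Theta t N₀ N := by
    intro N
    unfold Theta
    have := hb1 N
    split <;> positivity
  -- majorants
  set g1 : ℤ → ℝ := fun N => if |N - N₀| ≤ 2 then cN else 0 with hg1
  set g2 : ℤ → ℝ := fun N => if N ≤ M then (2:ℝ) ^ (3 * N) else 0 with hg2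
  set g3 : ℤ → ℝ := fun N => if M < N then a ^ (-(2:ℝ)) * (2:ℝ) ^ (-N) else 0 with hg3
  -- g2 : geometric sum, ratio 1/8
  have hG2 := geom_key ((2:ℝ) ^ (3 * M)) (8⁻¹) (fun n : ℕ => M - (n : ℤ))
    (fun x y hxy => by simpa using hxy) (fun N => N ≤ M)
    (fun N => by
      simp only [Set.mem_range]
      constructor
      · intro h; exact ⟨(M - N).toNat, show M - ((M - N).toNat : ℤ) = N by omega⟩
      · rintro ⟨n, rfl⟩; omega)
    (fun N => (2:ℝ) ^ (3 * N))
    (fun n => by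
      show (2:ℝ) ^ (3 * (M - (n:ℤ))) = (2:ℝ) ^ (3 * M) * 8⁻¹ ^ n
      rw [show 3 * (M - (n:ℤ)) = 3 * M + (-(3 * n) : ℤ) by ring,
        zpow_add₀ (by norm_num : (2:ℝ) ≠ 0)]
      congr 1
      rw [show (-(3 * (n:ℤ)) : ℤ) = (-3) * (n:ℤ) by ring, zpow_mul, zpow_natCast]
      norm_num)
    (by norm_num) (by norm_num)
  -- g3 : geometric sum, ratio 1/2
  have hG3 := geom_key (a ^ (-(2:ℝ)) * (2:ℝ) ^ (-(M + 1))) (2⁻¹)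
    (fun n : ℕ => M + 1 + (n : ℤ))
    (fun x y hxy => by simpa using hxy) (fun N => M < N)
    (fun N => by
      simp only [Set.mem_range]
      constructor
      · intro h; exact ⟨(N - M - 1).toNat, show M + 1 + ((N - M - 1).toNat : ℤ) = N by omega⟩
      · rintro ⟨n, rfl⟩; omega)
    (fun N => a ^ (-(2:ℝ)) * (2:ℝ) ^ (-N))
    (fun n => by
      show a ^ (-(2:ℝ)) * (2:ℝ) ^ (-(M + 1 + (n:ℤ))) = a ^ (-(2:ℝ)) * (2:ℝ) ^ (-(M+1)) * 2⁻¹ ^ n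
      rw [show (-(M + 1 + (n:ℤ)) : ℤ) = -(M + 1) + (-1) * (n:ℤ) by ring,
        zpow_add₀ (by norm_num : (2:ℝ) ≠ 0), zpow_mul, zpow_natCast]
      norm_num
      ring)
    (by norm_num) (by norm_num)
  -- g1 : finite sum
  have hg1zero : ∀ N : ℤ, N ∉ Finset.Icc (N₀ - 2) (N₀ + 2) → g1 N = 0 := by
    intro N hN
    simp only [Finset.mem_Icc, not_and_or, not_le] at hN
    have : ¬ |N - N₀| ≤ 2 := by rw [abs_le]; omega
    simp [hg1, this]
  have hG1sum : Summable g1 := summable_of_ne_finset_zero hg1zero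
  have hG1 : ∑' N : ℤ, g1 N ≤ 5 * cN := by
    rw [tsum_eq_sum hg1zero]
    have hcard : (Finset.Icc (N₀ - 2) (N₀ + 2)).card = 5 := by
      rw [Int.card_Icc]; omega
    calc ∑ N ∈ Finset.Icc (N₀ - 2) (N₀ + 2), g1 N
        ≤ (Finset.Icc (N₀ - 2) (N₀ + 2)).card • cN := by
          apply Finset.sum_le_card_nsmul
          intro x _
          simp only [hg1]
          split
          · exact le_rfl
          · exact hcN0
      _ = 5 * cN := by rw [hcard]; simp [nsmul_eq_mul]
  -- pointwise bound
  have hpw : ∀ N : ℤ, (2:ℝ) ^ (3 * N) * Theta t N₀ N ≤ g1 N + g2 N + g3 N := by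
    intro N
    have hg2nn : 0 ≤ g2 N := by simp only [hg2]; split <;> positivity
    have hg3nn : 0 ≤ g3 N := by
      simp only [hg3]; split
      · positivity
      · exact le_rfl
    have hg1nn : 0 ≤ g1 N := by simp only [hg1]; split <;> [exact hcN0; exact le_rfl]
    unfold Theta
    rw [← haa]
    by_cases hnear : |N - N₀| ≤ 2
    · rw [if_pos hnear]
      have : g1 N = cN := by simp [hg1, hnear]
      nlinarith [key32 N]
    · rw [if_neg hnear]
      have hg1z : g1 N = 0 := by simp [hg1, hnear]
      by_cases hNM : N ≤ M
      · have : g2 N = (2:ℝ) ^ (3 * N) := by simp [hg2, hNM]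
        have hle : (2:ℝ) ^ (3 * N) * (1 + a * (2:ℝ) ^ (2 * N)) ^ (-(2:ℝ))
            ≤ (2:ℝ) ^ (3 * N) := by
          have h1' : (1 + a * (2:ℝ) ^ (2 * N)) ^ (-(2:ℝ)) ≤ 1 :=
            Real.rpow_le_one_of_one_le_of_nonpos (hb1 N) (by norm_num)
          nlinarith [zpow_pos (by norm_num : (0:ℝ) < 2) (3 * N),
            Real.rpow_nonneg (le_trans zero_le_one (hb1 N)) (-(2:ℝ))]
        rw [hg1z, this]
        linarith
      · have hMN : M < N := by omega
        have hg3v : g3 N = a ^ (-(2:ℝ)) * (2:ℝ) ^ (-N) := by simp [hg3, hMN]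
        rw [hg1z, hg3v]
        have := key2 N
        linarith
  have hfnn : ∀ N : ℤ, 0 ≤ (2:ℝ) ^ (3 * N) * Theta t N₀ N := by
    intro N
    have := hTheta_nonneg N
    positivity
  have hGsum : Summable (fun N => g1 N + g2 N + g3 N) :=
    (hG1sum.add hG2.1).add hG3.1
  have hfsum : Summable (fun N : ℤ => (2:ℝ) ^ (3 * N) * Theta t N₀ N) :=
    Summable.of_nonneg_of_le hfnn hpw hGsum
  refine ⟨hfsum, ?_⟩
  -- bounds on the geometric tsums
  have hT2 : ∑' N : ℤ, g2 N ≤ (8/7) * cN := by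
    rw [hG2.2]
    have h3M : (2:ℝ) ^ (3 * M) ≤ cN := by
      -- from h1 : 2^(2M) ≤ a⁻¹
      have hr : ((2:ℝ) ^ (2 * M)) ^ ((3:ℝ)/2) ≤ (a⁻¹) ^ ((3:ℝ)/2) :=
        Real.rpow_le_rpow (by positivity) h1 (by norm_num)
      have hl : ((2:ℝ) ^ (2 * M)) ^ ((3:ℝ)/2) = (2:ℝ) ^ (3 * M) := by
        rw [hzr, show ((2 * M : ℤ) : ℝ) * ((3:ℝ)/2) = ((3 * M : ℤ) : ℝ) by push_cast; ring,
          Real.rpow_intCast]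
      have hrr : (a⁻¹) ^ ((3:ℝ)/2) = cN := by
        rw [hcN, ← Real.rpow_neg_one a, ← Real.rpow_mul ha.le]
        norm_num
      rw [hl, hrr] at hr
      exact hr
    nlinarith [hcN0]
  have hT3 : ∑' N : ℤ, g3 N ≤ 2 * cN := by
    rw [hG3.2]
    have hkey : a ^ (-(2:ℝ)) * (2:ℝ) ^ (-(M + 1)) ≤ cN := by
      have ha2 : (2:ℝ) ^ (-(2 * M + 2)) ≤ a := by
        have := h2
        have h2pos : (0:ℝ) < (2:ℝ) ^ (2 * M + 2) := zpow_pos (by norm_num) _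
        rw [zpow_neg]
        exact inv_le_of_inv_le₀ ha this
      have hr : ((2:ℝ) ^ (-(2 * M + 2))) ^ ((1:ℝ)/2) ≤ a ^ ((1:ℝ)/2) :=
        Real.rpow_le_rpow (by positivity) ha2 (by norm_num)
      have hl : ((2:ℝ) ^ (-(2 * M + 2))) ^ ((1:ℝ)/2) = (2:ℝ) ^ (-(M + 1)) := by
        rw [hzr, show ((-(2 * M + 2) : ℤ) : ℝ) * ((1:ℝ)/2) = ((-(M + 1) : ℤ) : ℝ) by
          push_cast; ring, Real.rpow_intCast]
      rw [hl] at hr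
      have hsplit : a ^ (-(2:ℝ)) * a ^ ((1:ℝ)/2) = cN := by
        rw [← Real.rpow_add ha, hcN]; norm_num
      calc a ^ (-(2:ℝ)) * (2:ℝ) ^ (-(M + 1))
          ≤ a ^ (-(2:ℝ)) * a ^ ((1:ℝ)/2) := by
            apply mul_le_mul_of_nonneg_left hr (Real.rpow_nonneg ha.le _)
        _ = cN := hsplit
    nlinarith [Real.rpow_nonneg ha.le (-(2:ℝ)), mul_nonneg (Real.rpow_nonneg ha.le (-(2:ℝ)))
      (le_of_lt (zpow_pos (by norm_num : (0:ℝ) < 2) (-(M + 1))))]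
  calc ∑' N : ℤ, (2:ℝ) ^ (3 * N) * Theta t N₀ N
      ≤ ∑' N : ℤ, (g1 N + g2 N + g3 N) := Summable.tsum_le_tsum hpw hfsum hGsum
    _ = (∑' N : ℤ, g1 N + ∑' N : ℤ, g2 N) + ∑' N : ℤ, g3 N := by
        rw [Summable.tsum_add (hG1sum.add hG2.1) hG3.1, Summable.tsum_add hG1sum hG2.1]
    _ ≤ (5 * cN + (8/7) * cN) + 2 * cN := by
        exact add_le_add (add_le_add hG1 hT2) hT3
    _ ≤ 10 * cN := by nlinarith [hcN0]
    _ = 10 * a ^ (-(3:ℝ)/2) := rfl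
end
end

section
/- Let F ∈ C²(ℝ) with F'(0) = 0. Then for all λ > 0 and all x, y ∈ ℝ³: F(λ|x−y|) = F(λ|x|) − λ ⟨y, w(x)⟩ F'(λ|x|) + λ² |y|² ∫₀¹ (1−θ) [ sin²α · F'(λ|x−θy|)/(λ|x−θy|) + cos²α · F''(λ|x−θy|) ] dθ, where for each θ, cos α = cos α(x,y,θ) is determined by |y| cos α = ⟨y, w(x−θy)⟩ and sin²α := 1 − cos²α, and the quotient F'(p)/p is understood as F''(0) at p = 0. -/
noncomputable section

open MeasureTheory Real Classical
open scoped RealInnerProductSpace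

/-- `w(x) = x/|x|` for `x ≠ 0`, and `w(0) = 0`. -/
noncomputable def wdir (x : EuclideanSpace ℝ (Fin 3)) : EuclideanSpace ℝ (Fin 3) :=
  if x = 0 then 0 else ‖x‖⁻¹ • x

/-- The quotient `F'(p)/p`, extended continuously by `F''(0)` at `p = 0`
(valid when `F'(0) = 0`). -/
noncomputable def dquot1 (F : ℝ → ℝ) (p : ℝ) : ℝ :=
  if p = 0 then iteratedDeriv 2 F 0 else deriv F p / p

/-!
The identity is Taylor's formula with integral remainder for `g t = F (λ‖x - t • y‖)` on
`[0, 1]`. Since `F'(0) = 0` we can write `F' p = p * q p` with `q = dquot1 F` continuous, so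
`g' t = -λ² ⟪x - t • y, y⟫ q (λ‖x - t • y‖)` for every `t`, also where the line through `x` in
direction `y` meets the origin. Where `x - t • y ≠ 0`, the product rule gives
`g'' t = λ² (‖y‖² q + (⟪x - t • y, y⟫ / ‖x - t • y‖)² (F'' - q))`, which is `λ²‖y‖²` times the
integrand. At the origin the first factor of `g'` vanishes and the second is merely continuous,
which still yields `g'' = λ²‖y‖² q(0)`; this matches the integrand because `w(0) = 0`.
-/

open Filter Topology Asymptotics

theorem HasDerivAt.mul_of_eq_zero {u v : ℝ → ℝ} {u' θ : ℝ} (hu : HasDerivAt u u' θ)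
    (hu0 : u θ = 0) (hv : ContinuousAt v θ) :
    HasDerivAt (fun t => u t * v t) (u' * v θ) θ := by
  rw [hasDerivAt_iff_isLittleO] at hu ⊢
  have hu' : (fun t => u t - u' * (t - θ)) =o[𝓝 θ] (fun t => t - θ) := by
    simpa [hu0, mul_comm] using hu
  have hv' : (fun t => v t - v θ) =o[𝓝 θ] (fun _ => (1 : ℝ)) :=
    (isLittleO_one_iff ℝ).2 (tendsto_sub_nhds_zero_iff.2 hv)
  have h1 : (fun t => (u t - u' * (t - θ)) * v t) =o[𝓝 θ] (fun t => t - θ) := by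
    simpa using hu'.mul_isBigO (hv.isBigO_one ℝ)
  have h2 : (fun t => u' * (t - θ) * (v t - v θ)) =o[𝓝 θ] (fun t => t - θ) := by
    simpa using ((isBigO_refl (fun t => t - θ) (𝓝 θ)).const_mul_left u').mul_isLittleO hv'
  simpa [hu0, smul_eq_mul] using (h1.add h2).congr_left (fun t => by ring)

theorem taylor_integral_remainder_two_of_hasDerivAt {g g' g'' : ℝ → ℝ} {a b : ℝ}
    (hg : ∀ t ∈ Set.uIcc a b, HasDerivAt g (g' t) t)
    (hg' : ∀ t ∈ Set.uIcc a b, HasDerivAt g' (g'' t) t)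
    (hint : IntervalIntegrable g'' volume a b) :
    g b = g a + (b - a) * g' a + ∫ t in a..b, (b - t) * g'' t := by
  have hderiv : ∀ t ∈ Set.uIcc a b,
      HasDerivAt (fun s => g s + (b - s) * g' s) ((b - t) * g'' t) t := by
    intro t ht
    refine ((hg t ht).add (((hasDerivAt_id t).const_sub b).mul (hg' t ht))).congr_deriv ?_
    simp
  rw [intervalIntegral.integral_eq_sub_of_hasDerivAt hderiv
    (hint.continuousOn_mul (by fun_prop))]
  ring

lemma iteratedDeriv_two_eq_deriv_deriv {𝕜 G : Type*} [NontriviallyNormedField 𝕜]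
    [NormedAddCommGroup G] [NormedSpace 𝕜 G] (f : 𝕜 → G) :
    iteratedDeriv 2 f = deriv (deriv f) := by
  rw [iteratedDeriv_succ, iteratedDeriv_one]

section dquot1

variable {F : ℝ → ℝ}

@[simp]
lemma dquot1_zero (F : ℝ → ℝ) : dquot1 F 0 = iteratedDeriv 2 F 0 := if_pos rfl

lemma dquot1_eventuallyEq {p : ℝ} (hp : p ≠ 0) : dquot1 F =ᶠ[𝓝 p] fun q => deriv F q / q :=
  eventuallyEq_of_mem (isOpen_ne.mem_nhds hp) fun _ hq => if_neg hq

lemma deriv_eq_mul_dquot1 (hF0 : deriv F 0 = 0) (p : ℝ) : deriv F p = p * dquot1 F p := by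
  rcases eq_or_ne p 0 with rfl | hp
  · simp [hF0]
  · rw [(dquot1_eventuallyEq hp).eq_of_nhds, mul_div_cancel₀ _ hp]

lemma continuous_dquot1 (hF : ContDiff ℝ 2 F) (hF0 : deriv F 0 = 0) : Continuous (dquot1 F) := by
  have hF' : ContDiff ℝ 1 (deriv F) := hF.deriv'
  rw [continuous_iff_continuousAt]
  intro p
  rcases eq_or_ne p 0 with rfl | hp
  · have h := (hF'.differentiable one_ne_zero 0).hasDerivAt.tendsto_slope_zero
    rw [← continuousWithinAt_compl_self, ContinuousWithinAt, dquot1_zero,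
      iteratedDeriv_two_eq_deriv_deriv]
    refine h.congr' (eventually_nhdsWithin_of_forall fun q (hq : q ≠ 0) => ?_)
    simp [dquot1, hq, hF0, div_eq_inv_mul]
  · exact (hF'.continuous.continuousAt.div continuousAt_id hp).congr (dquot1_eventuallyEq hp).symm

lemma hasDerivAt_dquot1 (hF : ContDiff ℝ 2 F) {p : ℝ} (hp : p ≠ 0) :
    HasDerivAt (dquot1 F) ((iteratedDeriv 2 F p - dquot1 F p) / p) p := by
  have hF' : ContDiff ℝ 1 (deriv F) := hF.deriv'
  have h := (hF'.differentiable one_ne_zero p).hasDerivAt.div (hasDerivAt_id p) hp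
  refine (h.congr_of_eventuallyEq (dquot1_eventuallyEq hp)).congr_deriv ?_
  rw [(dquot1_eventuallyEq hp).eq_of_nhds, iteratedDeriv_two_eq_deriv_deriv]
  simp only [id]
  field_simp

end dquot1

section radial

variable {E : Type*} [NormedAddCommGroup E] [InnerProductSpace ℝ E] {F : ℝ → ℝ}

theorem HasDerivAt.norm {f : ℝ → E} {f' : E} {t : ℝ} (hf : HasDerivAt f f' t) (h0 : f t ≠ 0) :
    HasDerivAt (fun s => ‖f s‖) (⟪f t, f'⟫ / ‖f t‖) t := by
  have hsq : ‖f t‖ ^ 2 ≠ 0 := pow_ne_zero 2 (norm_ne_zero_iff.2 h0)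
  have h := hf.norm_sq.sqrt hsq
  simp only [Real.sqrt_sq (norm_nonneg _)] at h
  convert h using 1
  field_simp

theorem HasDerivAt.hasFDerivAt_comp_norm (hF : HasDerivAt F 0 0) :
    HasFDerivAt (fun z : E => F ‖z‖) (0 : E →L[ℝ] ℝ) 0 := by
  rw [hasFDerivAt_iff_isLittleO_nhds_zero]
  have hN : Tendsto (fun z : E => ‖z‖) (𝓝 0) (𝓝 0) := by
    simpa using (continuous_norm.tendsto (0 : E))
  have h := (hasDerivAt_iff_isLittleO_nhds_zero.1 hF).comp_tendsto hN
  simpa [Function.comp_def] using h.trans_isBigO (isBigO_norm_left.2 (isBigO_refl _ _))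

lemma abs_inner_div_norm_le (z y : E) : |⟪z, y⟫ / ‖z‖| ≤ ‖y‖ := by
  rw [abs_div, abs_norm]
  exact div_le_of_le_mul₀ (norm_nonneg _) (norm_nonneg _)
    (by simpa [mul_comm] using abs_real_inner_le_norm z y)

lemma hasDerivAt_sub_smul (x y : E) (θ : ℝ) : HasDerivAt (fun t : ℝ => x - t • y) (-y) θ := by
  simpa using ((hasDerivAt_id θ).smul_const y).const_sub x

lemma hasDerivAt_comp_mul_norm_sub_smul (hF : Differentiable ℝ F) (hF0 : deriv F 0 = 0)
    (c : ℝ) (x y : E) (θ : ℝ) :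
    HasDerivAt (fun t => F (c * ‖x - t • y‖))
      (-(c ^ 2 * ⟪x - θ • y, y⟫) * dquot1 F (c * ‖x - θ • y‖)) θ := by
  have hz := hasDerivAt_sub_smul x y θ
  rcases eq_or_ne (x - θ • y) 0 with h0 | h0
  · have hFc : HasDerivAt (fun s => F (c * s)) 0 0 := by
      have h := (hF (c * 0)).hasDerivAt.comp 0 ((hasDerivAt_id 0).const_mul c)
      rw [mul_zero, hF0, zero_mul] at h
      exact h
    have hΦ := hFc.hasFDerivAt_comp_norm (E := E)
    rw [← h0] at hΦ
    have h := hΦ.comp_hasDerivAt θ hz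
    refine h.congr_deriv ?_
    simp [h0]
  · have h := (hF _).hasDerivAt.comp θ ((hz.norm h0).const_mul c)
    refine h.congr_deriv ?_
    rw [deriv_eq_mul_dquot1 hF0, inner_neg_right]
    field_simp

/-- `⟪D²Φ(z) y, y⟫` for the radial function `Φ z = F (c * ‖z‖)`. At `z = 0` the junk value
`⟪z, y⟫ / ‖z‖ = 0` leaves `c² ‖y‖² F''(0)`, the true value of the Hessian form there. -/
def radialHessianForm (F : ℝ → ℝ) (c : ℝ) (z y : E) : ℝ :=
  c ^ 2 * (‖y‖ ^ 2 * dquot1 F (c * ‖z‖) +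
    (⟪z, y⟫ / ‖z‖) ^ 2 * (iteratedDeriv 2 F (c * ‖z‖) - dquot1 F (c * ‖z‖)))

lemma hasDerivAt_neg_inner_mul_dquot1 (hF : ContDiff ℝ 2 F) (hF0 : deriv F 0 = 0) {c : ℝ}
    (hc : c ≠ 0) (x y : E) (θ : ℝ) :
    HasDerivAt (fun t => -(c ^ 2 * ⟪x - t • y, y⟫) * dquot1 F (c * ‖x - t • y‖))
      (radialHessianForm F c (x - θ • y) y) θ := by
  have hz := hasDerivAt_sub_smul x y θ
  have hu : HasDerivAt (fun t => -(c ^ 2 * ⟪x - t • y, y⟫)) (c ^ 2 * ‖y‖ ^ 2) θ := by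
    refine ((hz.inner ℝ (hasDerivAt_const θ y)).const_mul (c ^ 2)).neg.congr_deriv ?_
    simp
  rcases eq_or_ne (x - θ • y) 0 with h0 | h0
  · have hv : ContinuousAt (fun t => dquot1 F (c * ‖x - t • y‖)) θ :=
      ((continuous_dquot1 hF hF0).comp (by fun_prop)).continuousAt
    refine (hu.mul_of_eq_zero (by simp [h0]) hv).congr_deriv ?_
    simp [radialHessianForm, h0, mul_assoc]
  · have hcr : c * ‖x - θ • y‖ ≠ 0 := mul_ne_zero hc (norm_ne_zero_iff.2 h0)
    have hv := (hasDerivAt_dquot1 hF hcr).comp θ ((hz.norm h0).const_mul c)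
    refine (hu.mul hv).congr_deriv ?_
    simp only [radialHessianForm, inner_neg_right, Function.comp_def]
    field_simp

lemma continuous_radialHessianForm (hF : ContDiff ℝ 2 F) (hF0 : deriv F 0 = 0) (c : ℝ)
    (y : E) : Continuous fun z : E => radialHessianForm F c z y := by
  have hq : Continuous fun z : E => dquot1 F (c * ‖z‖) :=
    (continuous_dquot1 hF hF0).comp (by fun_prop)
  have hD : Continuous fun z : E => iteratedDeriv 2 F (c * ‖z‖) - dquot1 F (c * ‖z‖) :=
    ((hF.continuous_iteratedDeriv 2 le_rfl).comp (by fun_prop)).sub hq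
  rw [continuous_iff_continuousAt]
  intro z
  refine continuousAt_const.mul ((continuousAt_const.mul hq.continuousAt).add ?_)
  rcases eq_or_ne z 0 with rfl | hz
  · have hlim := (hD.tendsto (0 : E)).norm.const_mul (‖y‖ ^ 2)
    simp only [norm_zero, mul_zero, dquot1_zero, sub_self] at hlim
    rw [ContinuousAt, inner_zero_left, zero_div, zero_pow two_ne_zero, zero_mul]
    refine squeeze_zero_norm (fun w => ?_) hlim
    rw [norm_mul, norm_pow, Real.norm_eq_abs]
    gcongr
    exact abs_inner_div_norm_le w y
  · exact ((((continuous_id.inner continuous_const).continuousAt).div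
      continuous_norm.continuousAt (norm_ne_zero_iff.2 hz)).pow 2).mul hD.continuousAt

lemma radialHessianForm_eq (c : ℝ) (z : E) {y : E} (hy : y ≠ 0) :
    radialHessianForm F c z y = c ^ 2 * ‖y‖ ^ 2 *
      ((1 - (⟪z, y⟫ / ‖z‖ / ‖y‖) ^ 2) * dquot1 F (c * ‖z‖)
        + (⟪z, y⟫ / ‖z‖ / ‖y‖) ^ 2 * iteratedDeriv 2 F (c * ‖z‖)) := by
  have : ‖y‖ ≠ 0 := norm_ne_zero_iff.2 hy
  simp only [radialHessianForm]
  field_simp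
  ring

end radial

lemma inner_wdir (y z : EuclideanSpace ℝ (Fin 3)) : ⟪y, wdir z⟫ = ⟪z, y⟫ / ‖z‖ := by
  rcases eq_or_ne z 0 with rfl | hz
  · simp [wdir]
  · rw [wdir, if_neg hz, real_inner_smul_right, real_inner_comm, div_eq_inv_mul]

/-- Taylor-type expansion, Lemma 3.5(ii): for `F ∈ C²(ℝ)` with `F'(0) = 0`,
`λ > 0` and `x, y ∈ ℝ³`,
`F(λ|x-y|) = F(λ|x|) - λ⟨y,w(x)⟩F'(λ|x|) + λ²|y|² ∫₀¹ (1-θ)[sin²α · F'(λ|x-θy|)/(λ|x-θy|)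
 + cos²α · F''(λ|x-θy|)] dθ`, where `|y| cos α = ⟨y, w(x-θy)⟩` and `sin²α = 1 - cos²α`. -/
theorem stmt9 (F : ℝ → ℝ) (hF : ContDiff ℝ 2 F) (hF0 : deriv F 0 = 0)
    (lam : ℝ) (hlam : 0 < lam) (x y : EuclideanSpace ℝ (Fin 3)) :
    F (lam * ‖x - y‖) = F (lam * ‖x‖) - lam * ⟪y, wdir x⟫ * deriv F (lam * ‖x‖)
      + lam ^ 2 * ‖y‖ ^ 2 *
        ∫ θ in (0 : ℝ)..1, (1 - θ) *
          ((1 - (⟪y, wdir (x - θ • y)⟫ / ‖y‖) ^ 2) * dquot1 F (lam * ‖x - θ • y‖)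
            + (⟪y, wdir (x - θ • y)⟫ / ‖y‖) ^ 2 * iteratedDeriv 2 F (lam * ‖x - θ • y‖)) := by
  rcases eq_or_ne y 0 with rfl | hy
  · simp
  have htaylor := taylor_integral_remainder_two_of_hasDerivAt (a := 0) (b := 1)
    (g := fun t => F (lam * ‖x - t • y‖))
    (fun t _ => hasDerivAt_comp_mul_norm_sub_smul (hF.differentiable two_ne_zero) hF0 lam x y t)
    (fun t _ => hasDerivAt_neg_inner_mul_dquot1 hF hF0 hlam.ne' x y t)
    (((continuous_radialHessianForm hF hF0 lam y).comp (by fun_prop)).intervalIntegrable 0 1)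
  simp only [one_smul, zero_smul, sub_zero, one_mul] at htaylor
  simp_rw [htaylor, inner_wdir, radialHessianForm_eq lam _ hy, deriv_eq_mul_dquot1 hF0,
    ← intervalIntegral.integral_const_mul]
  have hx : ⟪x, y⟫ / ‖x‖ * ‖x‖ = ⟪x, y⟫ :=
    div_mul_cancel_of_imp fun h => by simp [norm_eq_zero.1 h]
  congr 1
  · linear_combination lam ^ 2 * dquot1 F (lam * ‖x‖) * hx
  · congr 1
    funext t
    ring
end
end

section
/- There is a constant C > 0, depending only on χ, such that for all real t ≠ 0: | ∫₀^∞ χ(λ) sin(t λ²) λ^{−2} dλ | ≤ C |t|^{1/2}. -/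
noncomputable section

open MeasureTheory Real

/-- With `χ` a smooth even low-energy cutoff (`χ = 1` on `[-λ₀, λ₀]`,
`χ = 0` off `(-2λ₀, 2λ₀)`, `0 < λ₀ < 1`), there is `C > 0` depending only on `χ` such that
for all `t ≠ 0`, `|∫₀^∞ χ(λ) sin(tλ²) λ^{-2} dλ| ≤ C |t|^{1/2}`. -/
theorem stmt16 (lam₀ : ℝ) (hlam₀ : 0 < lam₀) (hlam₀' : lam₀ < 1)
    (χ : ℝ → ℝ) (hχs : ContDiff ℝ (⊤ : ℕ∞) χ) (hχe : ∀ s, χ (-s) = χ s)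
    (hχ1 : ∀ s, |s| ≤ lam₀ → χ s = 1) (hχ0 : ∀ s, 2 * lam₀ ≤ |s| → χ s = 0) :
    ∃ C : ℝ, 0 < C ∧ ∀ t : ℝ, t ≠ 0 →
      |∫ lam in Set.Ioi (0 : ℝ), χ lam * Real.sin (t * lam ^ 2) * (lam ^ 2)⁻¹|
        ≤ C * |t| ^ ((1 : ℝ) / 2) := by
  obtain ⟨M0, hM0⟩ := (isCompact_Icc (a := -(2 * lam₀)) (b := 2 * lam₀)).exists_bound_of_continuousOn
    hχs.continuous.continuousOn
  set M : ℝ := max M0 1 with hM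
  have hM1 : (1 : ℝ) ≤ M := le_max_right _ _
  have hMpos : 0 < M := lt_of_lt_of_le one_pos hM1
  have hχb : ∀ s, |χ s| ≤ M := by
    intro s
    by_cases hs : s ∈ Set.Icc (-(2 * lam₀)) (2 * lam₀)
    · exact (hM0 s hs).trans (le_max_left _ _)
    · have h2 : ¬ |s| ≤ 2 * lam₀ := by simpa [Set.mem_Icc, abs_le] using hs
      rw [hχ0 s (le_of_not_ge h2)]
      simpa using hMpos.le
  refine ⟨2 * M, by linarith, fun t ht => ?_⟩
  have htpos : 0 < |t| := abs_pos.mpr ht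
  set r : ℝ := |t| ^ (-((1 : ℝ) / 2)) with hrdef
  have hr : 0 < r := rpow_pos_of_pos htpos _
  set f : ℝ → ℝ := fun lam => χ lam * Real.sin (t * lam ^ 2) * (lam ^ 2)⁻¹ with hf
  have hfm : Measurable f := by
    exact (hχs.continuous.measurable.mul
      ((Real.continuous_sin.comp (continuous_const.mul (continuous_pow 2))).measurable)).mul
      ((measurable_id.pow_const 2).inv)
  -- pointwise bounds
  have hbd1 : ∀ lam ∈ Set.Ioc (0 : ℝ) r, ‖f lam‖ ≤ M * |t| := by
    intro lam hlam
    have hl : 0 < lam := hlam.1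
    have hl2 : (0 : ℝ) < lam ^ 2 := by positivity
    have hsin : |Real.sin (t * lam ^ 2)| ≤ |t| * lam ^ 2 := by
      calc |Real.sin (t * lam ^ 2)| ≤ |t * lam ^ 2| := Real.abs_sin_le_abs
        _ = |t| * lam ^ 2 := by rw [abs_mul, abs_of_pos hl2]
    calc ‖f lam‖ = |χ lam| * |Real.sin (t * lam ^ 2)| * (lam ^ 2)⁻¹ := by
          rw [Real.norm_eq_abs, abs_mul, abs_mul, abs_of_pos (inv_pos.mpr hl2)]
      _ ≤ M * (|t| * lam ^ 2) * (lam ^ 2)⁻¹ := by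
          apply mul_le_mul_of_nonneg_right _ (inv_pos.mpr hl2).le
          exact mul_le_mul (hχb lam) hsin (abs_nonneg _) hMpos.le
      _ = M * |t| := by field_simp
  have hbd2 : ∀ lam ∈ Set.Ioi r, ‖f lam‖ ≤ M * lam ^ (-2 : ℝ) := by
    intro lam hlam
    have hl : 0 < lam := lt_trans hr hlam
    have hl2 : (0 : ℝ) < lam ^ 2 := by positivity
    have hrpow : lam ^ (-2 : ℝ) = (lam ^ 2)⁻¹ := by
      rw [show (-2 : ℝ) = -((2 : ℕ) : ℝ) by norm_num, Real.rpow_neg hl.le,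
        Real.rpow_natCast]
    rw [hrpow]
    calc ‖f lam‖ = |χ lam| * |Real.sin (t * lam ^ 2)| * (lam ^ 2)⁻¹ := by
          rw [Real.norm_eq_abs, abs_mul, abs_mul, abs_of_pos (inv_pos.mpr hl2)]
      _ ≤ M * 1 * (lam ^ 2)⁻¹ := by
          apply mul_le_mul_of_nonneg_right _ (inv_pos.mpr hl2).le
          exact mul_le_mul (hχb lam) (abs_le.mpr ⟨Real.neg_one_le_sin _, Real.sin_le_one _⟩) (abs_nonneg _) hMpos.le
      _ = M * (lam ^ 2)⁻¹ := by ring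
  -- integrability
  have hInt1 : IntegrableOn f (Set.Ioc 0 r) := by
    apply Integrable.mono' (integrable_const (M * |t|)) hfm.aestronglyMeasurable.restrict
    filter_upwards [ae_restrict_mem measurableSet_Ioc] with lam hlam
    exact hbd1 lam hlam
  have hgInt : IntegrableOn (fun lam : ℝ => M * lam ^ (-2 : ℝ)) (Set.Ioi r) :=
    (integrableOn_Ioi_rpow_of_lt (by norm_num) hr).const_mul M
  have hInt2 : IntegrableOn f (Set.Ioi r) := by
    apply Integrable.mono' hgInt hfm.aestronglyMeasurable.restrict
    filter_upwards [ae_restrict_mem measurableSet_Ioi] with lam hlam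
    exact hbd2 lam hlam
  -- split the integral
  have hsplit : ∫ lam in Set.Ioi (0 : ℝ), ‖f lam‖
      = (∫ lam in Set.Ioc (0 : ℝ) r, ‖f lam‖) + ∫ lam in Set.Ioi r, ‖f lam‖ := by
    rw [← Set.Ioc_union_Ioi_eq_Ioi hr.le]
    exact setIntegral_union (Set.Ioc_disjoint_Ioi le_rfl) measurableSet_Ioi
      hInt1.norm hInt2.norm
  have h1 : ∫ lam in Set.Ioc (0 : ℝ) r, ‖f lam‖ ≤ M * (|t| * r) := by
    calc ∫ lam in Set.Ioc (0 : ℝ) r, ‖f lam‖ ≤ ∫ _lam in Set.Ioc (0 : ℝ) r, (M * |t|) :=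
          setIntegral_mono_on hInt1.norm ((integrableOn_const_iff (by finiteness)).mpr (Or.inr (by
            simp [Real.volume_Ioc]))) measurableSet_Ioc hbd1
      _ = M * (|t| * r) := by
          rw [setIntegral_const, measureReal_def, Real.volume_Ioc, smul_eq_mul,
            ENNReal.toReal_ofReal (by linarith)]
          ring
  have hr2 : ∫ lam in Set.Ioi r, lam ^ (-2 : ℝ) = r⁻¹ := by
    rw [integral_Ioi_rpow_of_lt (by norm_num) hr]
    rw [show (-2 : ℝ) + 1 = -1 by norm_num, Real.rpow_neg_one]
    field_simp
  have h2 : ∫ lam in Set.Ioi r, ‖f lam‖ ≤ M * r⁻¹ := by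
    calc ∫ lam in Set.Ioi r, ‖f lam‖ ≤ ∫ lam in Set.Ioi r, M * lam ^ (-2 : ℝ) :=
          setIntegral_mono_on hInt2.norm hgInt measurableSet_Ioi hbd2
      _ = M * r⁻¹ := by rw [integral_const_mul, hr2]
  -- arithmetic
  have htr : |t| * r = |t| ^ ((1 : ℝ) / 2) := by
    rw [hrdef]
    nth_rewrite 1 [← Real.rpow_one |t|]
    rw [← Real.rpow_add htpos]
    norm_num
  have hrinv : r⁻¹ = |t| ^ ((1 : ℝ) / 2) := by
    rw [hrdef, Real.rpow_neg htpos.le, inv_inv]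
  calc |∫ lam in Set.Ioi (0 : ℝ), χ lam * Real.sin (t * lam ^ 2) * (lam ^ 2)⁻¹|
      = ‖∫ lam in Set.Ioi (0 : ℝ), f lam‖ := by rw [Real.norm_eq_abs]
    _ ≤ ∫ lam in Set.Ioi (0 : ℝ), ‖f lam‖ := norm_integral_le_integral_norm f
    _ = (∫ lam in Set.Ioc (0 : ℝ) r, ‖f lam‖) + ∫ lam in Set.Ioi r, ‖f lam‖ := hsplit
    _ ≤ M * (|t| * r) + M * r⁻¹ := add_le_add h1 h2
    _ = 2 * M * |t| ^ ((1 : ℝ) / 2) := by rw [htr, hrinv]; ring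
end
end
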